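/- Let X_1, ..., X_n be points on the boundary of a convex body K \subset R^d, and suppose the \sigma-surface body K_\sigma^\tau is contained in the convex hull [X_2, ..., X_n]. Then \Delta(X_1, [X_2,...,X_n]) := conv([X_2,...,X_n] \cup {X_1}) \setminus [X_2,...,X_n] is contained in the visibility region Vis_\sigma(X_1, \tau). -/

import Mathlib

open MeasureTheory RealInnerProductSpace Set

/-- The `σ`-surface body `K_σ^t`: the intersection of all closed half-spaces
`H⁺ = {y : ⟪y,u⟫ ≤ c}` (for `u ≠ 0`) whose complementary half-space
`H⁻ = {y : ⟪y,u⟫ ≥ c}` cuts off `σ`-measure at most `t` from `∂K`. -/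
def surfaceBody {d : ℕ} (K : Set (EuclideanSpace ℝ (Fin d)))
    (σ : Measure (EuclideanSpace ℝ (Fin d))) (t : ℝ) : Set (EuclideanSpace ℝ (Fin d)) :=
  ⋂ (u : EuclideanSpace ℝ (Fin d)) (c : ℝ) (_ : u ≠ 0)
    (_ : σ (frontier K ∩ {y | c ≤ ⟪y, u⟫}) ≤ ENNReal.ofReal t),
    {y | ⟪y, u⟫ ≤ c}

/-- The visibility region of `z ∈ ∂K`: all points of `K \ K_σ^τ` visible from `z` around
the obstacle `K_σ^τ`. -/
def visRegion {d : ℕ} (K : Set (EuclideanSpace ℝ (Fin d)))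
    (σ : Measure (EuclideanSpace ℝ (Fin d))) (τ : ℝ) (z : EuclideanSpace ℝ (Fin d)) :
    Set (EuclideanSpace ℝ (Fin d)) :=
  {y | y ∈ K \ surfaceBody K σ τ ∧ segment ℝ z y ∩ surfaceBody K σ τ = ∅}

/-- A point `w` of `L` on `[z, y]` would put `y` on the segment from `w` to the point of `L`
behind `y` as seen from `z`, hence in `L`. -/
theorem disjoint_segment_of_mem_convexHull_insert_diff {𝕜 E : Type*} [Field 𝕜] [LinearOrder 𝕜]
    [IsStrictOrderedRing 𝕜] [AddCommGroup E] [Module 𝕜 E] {L : Set E} (hL : Convex 𝕜 L)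
    {z y : E} (hy : y ∈ convexHull 𝕜 (insert z L) \ L) : Disjoint (segment 𝕜 z y) L := by
  rcases L.eq_empty_or_nonempty with rfl | hne
  · exact disjoint_empty _
  obtain ⟨hy, hyL⟩ := hy
  rw [convexHull_insert hne, hL.convexHull_eq, mem_convexJoin] at hy
  obtain ⟨_, rfl, p, hp, hzyp⟩ := hy
  refine Set.disjoint_right.2 fun w hw hwzy => hyL ?_
  have hwyp : Wbtw 𝕜 w y p :=
    (mem_segment_iff_wbtw.1 hzyp).trans_left_right (mem_segment_iff_wbtw.1 hwzy)
  exact hL.segment_subset hw hp hwyp.mem_segment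

theorem wet_part_subset_visRegion_general {d : ℕ}
    (K : Set (EuclideanSpace ℝ (Fin d))) (hKcomp : IsCompact K) (hKconv : Convex ℝ K)
    (σ : Measure (EuclideanSpace ℝ (Fin d)))
    (τ : ℝ)
    (n : ℕ) (X : Fin (n + 1) → EuclideanSpace ℝ (Fin d))
    (hX : ∀ i, X i ∈ frontier K)
    (hsb : surfaceBody K σ τ ⊆ convexHull ℝ (Set.range (X ∘ Fin.succ))) :
    convexHull ℝ (convexHull ℝ (Set.range (X ∘ Fin.succ)) ∪ {X 0}) \
        convexHull ℝ (Set.range (X ∘ Fin.succ))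
      ⊆ visRegion K σ τ (X 0) := by
  set L := convexHull ℝ (Set.range (X ∘ Fin.succ))
  have hXK : ∀ i, X i ∈ K := fun i => hKcomp.isClosed.frontier_subset (hX i)
  have hLK : L ⊆ K := convexHull_min (range_subset_iff.2 fun i => hXK _) hKconv
  rintro y hy
  rw [union_singleton] at hy
  have hyK : y ∈ K := convexHull_min (insert_subset (hXK 0) hLK) hKconv hy.1
  refine ⟨⟨hyK, fun hy' => hy.2 (hsb hy')⟩, ?_⟩
  exact ((disjoint_segment_of_mem_convexHull_insert_diff (convex_convexHull ℝ _) hy).mono_right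
    hsb).inter_eq

/-- If the surface body `K_σ^τ` is contained in the convex hull of
`X 2, ..., X n`, then `Δ(X 1, [X 2,...,X n]) = conv([X 2,...,X n] ∪ {X 1}) \ [X 2,...,X n]`
is contained in the visibility region `Vis_σ(X 1, τ)`. -/
theorem wet_part_subset_visRegion {d : ℕ}
    (K : Set (EuclideanSpace ℝ (Fin d))) (hKcomp : IsCompact K) (hKconv : Convex ℝ K)
    (σ : Measure (EuclideanSpace ℝ (Fin d))) [IsProbabilityMeasure σ]
    (hσsupp : σ (frontier K)ᶜ = 0)
    (τ : ℝ) (hτ : τ ∈ Set.Ioo (0 : ℝ) 1)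
    (n : ℕ) (X : Fin (n + 1) → EuclideanSpace ℝ (Fin d))
    (hX : ∀ i, X i ∈ frontier K)
    (hsb : surfaceBody K σ τ ⊆ convexHull ℝ (Set.range (X ∘ Fin.succ))) :
    convexHull ℝ (convexHull ℝ (Set.range (X ∘ Fin.succ)) ∪ {X 0}) \
        convexHull ℝ (Set.range (X ∘ Fin.succ))
      ⊆ visRegion K σ τ (X 0) :=
  wet_part_subset_visRegion_general K hKcomp hKconv σ τ n X hX hsb
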